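/- Let G be a large scale group, K a bounded symmetric subset of G with 1 ∈ K, and B a bounded subset of G such that G \ B has exactly two K-components L and R, both of which are unbounded, and G acts trivially on L and on R (i.e. for every g ∈ G the symmetric differences L Δ (g·L) and R Δ (g·R) are bounded). Assume moreover that either (1) B is K-connected, or (2) B ⊆ h·Kⁿ for some h ∈ G and n ≥ 1. Then G has a cyclic subgroup of bounded index: there exist g ∈ G and a bounded subset C of G with C·⟨g⟩ = G. -/

import Mathlib

open Set Pointwise

/-- One step of a `K`-chain inside the set `A`. -/
def KStep {G : Type*} [Group G] (K A : Set G) (x y : G) : Prop :=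
  x ∈ A ∧ y ∈ A ∧ x⁻¹ * y ∈ K

/-- `x` and `y` are joined by a `K`-chain inside `A`. -/
def KConn {G : Type*} [Group G] (K A : Set G) (x y : G) : Prop :=
  Relation.ReflTransGen (KStep K A) x y

/-!
Since `R` moves only by a bounded set under translation and is unbounded, it meets each of its
translates; as `R` is `K`-connected, every element of `G` is then a product of elements of `K`.
Enlarge `B` to a bounded `K`-connected set `T` touching `R` and translate `T` by some `g` far into
`L`. Then `R ∪ T` is `K`-connected and misses `g • B`, and since `R` meets `g • R` this forces
`R ∪ B ⊆ g • R`, i.e. `g • (L ∪ B) ⊆ L`. A `K`-chain leaving `g ^ n • (L ∪ B)` must cross the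
walls `g • B, …, g ^ n • B` one step at a time, so every point lies in some but not all of the
decreasing sets `g ^ m • (L ∪ B)`, and the bounded set `g • R \ R = (L ∪ B) \ g • (L ∪ B)` is a
fundamental domain for `⟨g⟩`.
-/

section

variable {G : Type*} [Group G]

structure IsGroupBornology (ℬ : Set (Set G)) : Prop where
  singleton_mem : ∀ g : G, {g} ∈ ℬ
  mem_of_subset : ∀ S T : Set G, S ⊆ T → T ∈ ℬ → S ∈ ℬ
  union_mem : ∀ S ∈ ℬ, ∀ T ∈ ℬ, S ∪ T ∈ ℬ
  mul_mem : ∀ S ∈ ℬ, ∀ T ∈ ℬ, S * T ∈ ℬ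
  inv_mem : ∀ S ∈ ℬ, S⁻¹ ∈ ℬ

namespace IsGroupBornology

variable {ℬ : Set (Set G)} {S T : Set G}

theorem smul_mem (hℬ : IsGroupBornology ℬ) (a : G) (hS : S ∈ ℬ) : a • S ∈ ℬ := by
  have h : {a} * S = a • S := by rw [singleton_mul, ← image_smul]; rfl
  exact h ▸ hℬ.mul_mem _ (hℬ.singleton_mem a) _ hS

theorem pow_mem (hℬ : IsGroupBornology ℬ) (hS : S ∈ ℬ) : ∀ n : ℕ, S ^ n ∈ ℬ
  | 0 => by simpa only [pow_zero, ← singleton_one] using hℬ.singleton_mem 1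
  | n + 1 => by simpa only [pow_succ] using hℬ.mul_mem _ (hℬ.pow_mem hS n) _ hS

theorem exists_mem_notMem (hℬ : IsGroupBornology ℬ) (hS : S ∉ ℬ) (hT : T ∈ ℬ) :
    ∃ x ∈ S, x ∉ T :=
  not_subset.mp fun h => hS (hℬ.mem_of_subset _ _ h hT)

theorem nonempty_of_notMem (hℬ : IsGroupBornology ℬ) (hS : S ∉ ℬ) : S.Nonempty :=
  let ⟨x, hx, _⟩ := hℬ.exists_mem_notMem hS (hℬ.singleton_mem 1)
  ⟨x, hx⟩

theorem smul_inter_nonempty (hℬ : IsGroupBornology ℬ) {g : G} (hS : S ∉ ℬ)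
    (htriv : (S \ g • S) ∪ (g • S \ S) ∈ ℬ) : (g • S ∩ S).Nonempty := by
  by_contra h
  exact hS (hℬ.mem_of_subset _ _ (fun x hx => Or.inl ⟨hx, fun hgx => h ⟨x, hgx, hx⟩⟩) htriv)

end IsGroupBornology

namespace KConn

variable {K A A' : Set G} {x y : G}

theorem mono (h : A ⊆ A') (hc : KConn K A x y) : KConn K A' x y :=
  Relation.ReflTransGen.mono (fun _ _ hab => ⟨h hab.1, h hab.2.1, hab.2.2⟩) _ _ hc

theorem symm (hK : K⁻¹ = K) (hc : KConn K A x y) : KConn K A y x := by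
  have : Std.Symm (KStep K A) := ⟨fun a b hab => ⟨hab.2.1, hab.1, by
    rw [← hK, mem_inv, mul_inv_rev, inv_inv]; exact hab.2.2⟩⟩
  exact Std.Symm.symm (r := Relation.ReflTransGen (KStep K A)) _ _ hc

theorem smul (a : G) (hc : KConn K A x y) : KConn K (a • A) (a * x) (a * y) :=
  Relation.ReflTransGen.lift (a * ·) (fun _ _ h => ⟨smul_mem_smul_set h.1,
    smul_mem_smul_set h.2.1, by simpa only [mul_inv_rev, mul_assoc, inv_mul_cancel_left]
      using h.2.2⟩) _ _ hc

theorem exists_inv_mul_mem_pow (hc : KConn K A x y) : ∃ n : ℕ, x⁻¹ * y ∈ K ^ n := by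
  induction hc with
  | refl => exact ⟨0, by simp⟩
  | @tail b c _ hbc ih =>
    obtain ⟨n, hn⟩ := ih
    exact ⟨n + 1, by
      simpa only [pow_succ, mul_assoc, mul_inv_cancel_left] using mul_mem_mul hn hbc.2.2⟩

end KConn

def IsKConnected (K A : Set G) : Prop :=
  ∀ x ∈ A, ∀ y ∈ A, KConn K A x y

namespace IsKConnected

variable {K A A' : Set G}

theorem of_forall_kConn (hK : K⁻¹ = K) {c : G} (h : ∀ x ∈ A, KConn K A c x) :
    IsKConnected K A :=
  fun x hx y hy => ((h x hx).symm hK).trans (h y hy)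

theorem smul (hA : IsKConnected K A) (a : G) : IsKConnected K (a • A) := by
  rintro _ ⟨x, hx, rfl⟩ _ ⟨y, hy, rfl⟩
  exact (hA x hx y hy).smul a

theorem union (hK : K⁻¹ = K) (hA : IsKConnected K A) (hA' : IsKConnected K A') {c : G}
    (hc : c ∈ A) (hc' : c ∈ A') : IsKConnected K (A ∪ A') :=
  of_forall_kConn hK fun x hx => hx.elim
    (fun hx => (hA c hc x hx).mono subset_union_left)
    (fun hx => (hA' c hc' x hx).mono subset_union_right)

theorem insert (hK : K⁻¹ = K) (hA : IsKConnected K A) {a b : G} (hb : b ∈ A)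
    (hab : a⁻¹ * b ∈ K) : IsKConnected K (insert a A) := by
  refine of_forall_kConn hK (c := b) fun x hx => ?_
  rcases hx with rfl | hx
  · exact KConn.symm hK (.single ⟨mem_insert x A, mem_insert_of_mem x hb, hab⟩)
  · exact (hA b hb x hx).mono (subset_insert a A)

theorem pow (hK : K⁻¹ = K) (hK1 : (1 : G) ∈ K) (n : ℕ) : IsKConnected K (K ^ n) := by
  refine of_forall_kConn hK (c := 1) fun w hw => ?_
  induction n generalizing w with
  | zero => rw [pow_zero, mem_one] at hw; rw [hw]; exact .refl
  | succ n ih =>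
    rw [pow_succ] at hw
    obtain ⟨v, hv, k, hk, rfl⟩ := hw
    refine ((ih v hv).mono (pow_subset_pow_right hK1 n.le_succ)).tail ⟨?_, ?_, ?_⟩
    · exact pow_subset_pow_right hK1 n.le_succ hv
    · rw [pow_succ]; exact mul_mem_mul hv hk
    · rwa [inv_mul_cancel_left]

end IsKConnected

section Words

variable {K : Set G}

theorem exists_mem_pow_of_smul_inter_nonempty {R : Set G} {x₀ : G} (hx₀ : x₀ ∈ R)
    (hR : ∀ x ∈ R, ∀ y ∈ R, ∃ n : ℕ, x⁻¹ * y ∈ K ^ n)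
    (hmeet : ∀ g : G, (g • R ∩ R).Nonempty) (w : G) : ∃ n : ℕ, w ∈ K ^ n := by
  obtain ⟨_, ⟨l, hl, rfl⟩, hzl⟩ := hmeet (x₀ * w * x₀⁻¹)
  obtain ⟨m, hm⟩ := hR x₀ hx₀ _ hzl
  obtain ⟨n, hn⟩ := hR l hl x₀ hx₀
  refine ⟨m + n, ?_⟩
  rw [pow_add]
  convert mul_mem_mul hm hn using 1
  simp only [smul_eq_mul]
  group

theorem exists_mem_mul_notMem_of_mem_pow {S : Set G} {n : ℕ} {x w : G} (hw : w ∈ K ^ n)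
    (hx : x ∈ S) (hxw : x * w ∉ S) : ∃ a ∈ S, ∃ k ∈ K, a * k ∉ S := by
  induction n generalizing x w with
  | zero =>
    rw [pow_zero, mem_one] at hw
    exact absurd (by rwa [hw, mul_one]) hxw
  | succ n ih =>
    rw [pow_succ'] at hw
    obtain ⟨k, hk, v, hv, rfl⟩ := hw
    by_cases hxk : x * k ∈ S
    · exact ih hv hxk (by rwa [mul_assoc])
    · exact ⟨x, hx, k, hk, hxk⟩

theorem notMem_pow_smul_of_inv_mul_mem_pow {g y : G} {P W : Set G} (hgP : g • P ⊆ P)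
    (hgW : Disjoint (g • P) W) (hbdry : ∀ z ∈ P, ∀ k ∈ K, z * k ∉ P → z ∈ W) (hy : y ∉ P) :
    ∀ (n : ℕ) (z : G), z⁻¹ * y ∈ K ^ n → z ∉ g ^ n • P := by
  intro n
  induction n with
  | zero =>
    intro z hz
    rw [pow_zero, mem_one, inv_mul_eq_one] at hz
    simpa [hz] using hy
  | succ n ih =>
    intro z hz hzP
    rw [pow_succ'] at hz
    obtain ⟨k, hk, w, hw, hkw⟩ := hz
    have hzk : z * k ∉ g ^ n • P := ih (z * k) (by rwa [mul_inv_rev, mul_assoc, ← hkw,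
      inv_mul_cancel_left])
    rw [pow_succ, mul_smul, mem_smul_set_iff_inv_smul_mem] at hzP
    refine disjoint_left.mp hgW hzP (hbdry _ (hgP hzP) k hk fun h => hzk ?_)
    rwa [mem_smul_set_iff_inv_smul_mem, smul_eq_mul, ← mul_assoc]

end Words

theorem inv_sdiff_mul_zpowers_eq_univ {g : G} {P : Set G} (hgP : g • P ⊆ P)
    (hmem : ∀ z : G, ∃ m : ℤ, z ∈ g ^ m • P) (hnotMem : ∀ z : G, ∃ m : ℤ, z ∉ g ^ m • P) :
    (P \ g • P)⁻¹ * (Subgroup.zpowers g : Set G) = univ := by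
  classical
  have hanti : Antitone fun m : ℤ => g ^ m • P := antitone_int_of_succ_le fun m => by
    simpa only [zpow_add_one, mul_smul] using smul_set_mono hgP
  refine eq_univ_of_forall fun z => ?_
  obtain ⟨m₀, hm₀⟩ := hnotMem z⁻¹
  obtain ⟨m, hm, hmax⟩ : ∃ m : ℤ, z⁻¹ ∈ g ^ m • P ∧ ∀ m', z⁻¹ ∈ g ^ m' • P → m' ≤ m :=
    Int.exists_greatest_of_bdd
      ⟨m₀, fun m h => le_of_not_gt fun hlt => hm₀ (hanti hlt.le h)⟩ (hmem z⁻¹)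
  have hsucc : z⁻¹ ∉ g ^ m • g • P := fun h =>
    (lt_add_one m).not_ge (hmax (m + 1) (by rwa [zpow_add_one, mul_smul]))
  have hD : (g ^ m)⁻¹ * z⁻¹ ∈ P \ g • P := by
    rw [← smul_eq_mul, ← mem_smul_set_iff_inv_smul_mem, smul_set_sdiff]
    exact ⟨hm, hsucc⟩
  exact ⟨_, inv_mem_inv.mpr hD, _, inv_mem (Subgroup.zpow_mem_zpowers g m), by group⟩

section TwoComponents

variable {K B L R : Set G}

theorem mem_of_notMem_of_mul_mem (hLR : L ∪ R = Bᶜ)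
    (hsep : ∀ x ∈ L, ∀ y ∈ R, ¬ KConn K Bᶜ x y) {z k : G} (hk : k ∈ K) (hz : z ∉ R)
    (hzk : z * k ∈ R) : z ∈ B := by
  by_contra hzB
  have hzL : z ∈ L := (hLR ▸ hzB : z ∈ L ∪ R).resolve_right hz
  exact hsep z hzL _ hzk
    (.single ⟨hLR ▸ Or.inl hzL, hLR ▸ Or.inr hzk, by rwa [inv_mul_cancel_left]⟩)

theorem isKConnected_of_kConn_compl (hK : K⁻¹ = K) (hLR : L ∪ R = Bᶜ)
    (hsep : ∀ x ∈ L, ∀ y ∈ R, ¬ KConn K Bᶜ x y) (hR : ∀ x ∈ R, ∀ y ∈ R, KConn K Bᶜ x y) :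
    IsKConnected K R := by
  suffices h : ∀ {x y : G}, x ∈ R → KConn K Bᶜ x y → KConn K R x y ∧ y ∈ R from
    fun x hx y hy => (h hx (hR x hx y hy)).1
  intro x y hx hxy
  induction hxy with
  | refl => exact ⟨.refl, hx⟩
  | @tail b c _ hbc ih =>
    have hc : c ∈ R := by
      by_contra hc
      refine hbc.2.1 (mem_of_notMem_of_mul_mem hLR hsep (k := c⁻¹ * b) ?_ hc
        (by rw [mul_inv_cancel_left]; exact ih.2))
      rw [← hK, mem_inv, mul_inv_rev, inv_inv]
      exact hbc.2.2
    exact ⟨ih.1.tail ⟨ih.2, hc, hbc.2.2⟩, hc⟩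

theorem IsKConnected.subset_or_subset (hLR : L ∪ R = Bᶜ)
    (hsep : ∀ x ∈ L, ∀ y ∈ R, ¬ KConn K Bᶜ x y) {A : Set G} (hA : IsKConnected K A)
    (hAB : Disjoint A B) : A ⊆ L ∨ A ⊆ R := by
  refine or_iff_not_imp_left.mpr fun hAL y hyA => by_contra fun hyR => ?_
  obtain ⟨x, hxA, hxL⟩ := not_subset.mp hAL
  have hA' : A ⊆ L ∪ R := hLR ▸ hAB.subset_compl_right
  exact hsep y ((hA' hyA).resolve_right hyR) x ((hA' hxA).resolve_left hxL)
    ((hA y hyA x hxA).mono (hLR ▸ hA'))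

theorem exists_compl_subset_smul {ℬ : Set (Set G)} (hℬ : IsGroupBornology ℬ) (hK : K⁻¹ = K)
    (hLR : L ∪ R = Bᶜ) (hdisj : Disjoint L R) (hsep : ∀ x ∈ L, ∀ y ∈ R, ¬ KConn K Bᶜ x y)
    (hR : IsKConnected K R) (hLunb : L ∉ ℬ) (hmeet : ∀ g : G, (g • R ∩ R).Nonempty)
    {T : Set G} (hT : T ∈ ℬ) (hBT : B ⊆ T) (hTconn : IsKConnected K T) {a : G} (haT : a ∈ T)
    (haR : a ∈ R) : ∃ g : G, Lᶜ ⊆ g • R := by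
  obtain ⟨x, hxL, hx⟩ := hℬ.exists_mem_notMem hLunb
    (hℬ.mul_mem _ (hℬ.mul_mem _ hT _ (hℬ.inv_mem _ hT)) _ (hℬ.singleton_mem a))
  set g := x * a⁻¹
  have hga : g • a = x := inv_mul_cancel_right x a
  have hgT : Disjoint (g • T) T := by
    refine disjoint_left.mpr ?_
    rintro _ ⟨t, ht, rfl⟩ ht'
    exact hx ⟨_, mul_mem_mul ht' (inv_mem_inv.mpr ht), a, rfl, by simp [g]⟩
  have hgTL : g • T ⊆ L :=
    ((hTconn.smul g).subset_or_subset hLR hsep (hgT.mono_right hBT)).resolve_right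
      fun h => disjoint_left.mp hdisj hxL (hga ▸ h (smul_mem_smul_set haT))
  have hRT : Disjoint (R ∪ T) (g • B) := disjoint_union_left.mpr
    ⟨hdisj.symm.mono_right ((smul_set_mono hBT).trans hgTL),
      hgT.symm.mono_right (smul_set_mono hBT)⟩
  rcases ((hR.union hK hTconn haR haT).smul g⁻¹).subset_or_subset hLR hsep
    (disjoint_smul_set_left.mpr (by rwa [inv_inv])) with h | h
  · obtain ⟨_, ⟨r, hr, rfl⟩, hr'⟩ := hmeet g⁻¹
    exact absurd hr' (disjoint_left.mp hdisj (h (smul_mem_smul_set (Or.inl hr))))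
  · refine ⟨g, subset_smul_set_iff.mpr (Subset.trans (smul_set_mono fun z hz => ?_) h)⟩
    by_cases hzB : z ∈ B
    · exact Or.inr (hBT hzB)
    · exact Or.inl ((hLR ▸ hzB : z ∈ L ∪ R).resolve_left hz)

theorem notMem_pow_smul_compl (hLR : L ∪ R = Bᶜ) (hdisj : Disjoint L R)
    (hsep : ∀ x ∈ L, ∀ y ∈ R, ¬ KConn K Bᶜ x y) {g y z : G} (hg : g • Rᶜ ⊆ L) (hy : y ∈ R)
    {n : ℕ} (hz : z⁻¹ * y ∈ K ^ n) : z ∉ g ^ n • Rᶜ :=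
  notMem_pow_smul_of_inv_mul_mem_pow (W := B) (hg.trans hdisj.subset_compl_right)
    (subset_compl_iff_disjoint_right.mp (hg.trans (hLR ▸ subset_union_left)))
    (fun _ hz _ hk hzk => mem_of_notMem_of_mul_mem hLR hsep hk hz (not_not.mp hzk))
    (not_not_intro hy) n z hz

theorem inv_sdiff_mul_zpowers_eq_univ_of_compl_subset (hK : K⁻¹ = K) (hLR : L ∪ R = Bᶜ)
    (hdisj : Disjoint L R) (hsep : ∀ x ∈ L, ∀ y ∈ R, ¬ KConn K Bᶜ x y)
    (hgen : ∀ w : G, ∃ n : ℕ, w ∈ K ^ n) {x₀ y₀ g : G} (hx₀ : x₀ ∈ L) (hy₀ : y₀ ∈ R)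
    (hg : Lᶜ ⊆ g • R) : (g • R \ R)⁻¹ * (Subgroup.zpowers g : Set G) = univ := by
  have hgR : g • Rᶜ ⊆ L := by rw [smul_set_compl]; exact compl_subset_comm.mp hg
  have hgL : g⁻¹ • Lᶜ ⊆ R := subset_smul_set_iff.mp hg
  have hsep' : ∀ x ∈ R, ∀ y ∈ L, ¬ KConn K Bᶜ x y := fun x hx y hy h =>
    hsep y hy x hx (h.symm hK)
  have hP : Rᶜ \ g • Rᶜ = g • R \ R := by
    rw [smul_set_compl, sdiff_compl, sdiff_eq_compl_inter]
  rw [← hP]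
  refine inv_sdiff_mul_zpowers_eq_univ (hgR.trans hdisj.subset_compl_right) (fun z => ?_)
    (fun z => ?_)
  · obtain ⟨n, hn⟩ := hgen (z⁻¹ * x₀)
    have h := notMem_pow_smul_compl ((union_comm R L).trans hLR) hdisj.symm hsep' hgL hx₀ hn
    rw [smul_set_compl, notMem_compl_iff, inv_pow] at h
    exact ⟨-n, by
      simpa only [zpow_neg, zpow_natCast] using smul_set_mono hdisj.subset_compl_right h⟩
  · obtain ⟨n, hn⟩ := hgen (z⁻¹ * y₀)
    exact ⟨n, by simpa only [zpow_natCast] using notMem_pow_smul_compl hLR hdisj hsep hgR hy₀ hn⟩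

end TwoComponents

end

theorem two_components_cyclic_bounded_index_general {G : Type*} [Group G] (ℬ : Set (Set G))
    (hsingle : ∀ g : G, {g} ∈ ℬ)
    (hsubset : ∀ S T : Set G, S ⊆ T → T ∈ ℬ → S ∈ ℬ)
    (hunion : ∀ S ∈ ℬ, ∀ T ∈ ℬ, S ∪ T ∈ ℬ)
    (hmul : ∀ S ∈ ℬ, ∀ T ∈ ℬ, S * T ∈ ℬ)
    (hinv : ∀ S ∈ ℬ, S⁻¹ ∈ ℬ)
    (K : Set G) (hK : K ∈ ℬ) (hKsymm : K⁻¹ = K) (hK1 : (1 : G) ∈ K)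
    (B : Set G) (hB : B ∈ ℬ)
    (L R : Set G)
    (hLR : L ∪ R = Bᶜ) (hdisj : Disjoint L R)
    (hRconn : ∀ x ∈ R, ∀ y ∈ R, KConn K Bᶜ x y)
    (hsep : ∀ x ∈ L, ∀ y ∈ R, ¬ KConn K Bᶜ x y)
    (hLunb : L ∉ ℬ) (hRunb : R ∉ ℬ)
    (htrivR : ∀ g : G, (R \ (g • R)) ∪ ((g • R) \ R) ∈ ℬ)
    (hcond : (∀ x ∈ B, ∀ y ∈ B, KConn K B x y) ∨
      ∃ h : G, ∃ n : ℕ, 1 ≤ n ∧ B ⊆ h • (K ^ n)) :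
    ∃ g : G, ∃ C ∈ ℬ, C * ((Subgroup.zpowers g : Subgroup G) : Set G) = Set.univ := by
  have hℬ : IsGroupBornology ℬ := ⟨hsingle, hsubset, hunion, hmul, hinv⟩
  obtain ⟨x₀, hx₀⟩ := hℬ.nonempty_of_notMem hLunb
  obtain ⟨y₀, hy₀⟩ := hℬ.nonempty_of_notMem hRunb
  have hmeet : ∀ g : G, (g • R ∩ R).Nonempty := fun g => hℬ.smul_inter_nonempty hRunb (htrivR g)
  have hgen : ∀ w : G, ∃ n : ℕ, w ∈ K ^ n := exists_mem_pow_of_smul_inter_nonempty hy₀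
    (fun x hx y hy => (hRconn x hx y hy).exists_inv_mul_mem_pow) hmeet
  obtain ⟨N, hN⟩ := hgen (y₀⁻¹ * x₀)
  obtain ⟨a, haR, k, hk, hakR⟩ := exists_mem_mul_notMem_of_mem_pow hN hy₀
    (by rw [mul_inv_cancel_left]; exact disjoint_left.mp hdisj hx₀)
  have hakB : a * k ∈ B := mem_of_notMem_of_mul_mem hLR hsep (k := k⁻¹)
    (by rwa [← hKsymm, inv_mem_inv]) hakR (by rwa [mul_inv_cancel_right])
  obtain ⟨S, hS, hBS, hSconn⟩ : ∃ S ∈ ℬ, B ⊆ S ∧ IsKConnected K S := by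
    rcases hcond with hBconn | ⟨h, n, -, hBn⟩
    · exact ⟨B, hB, subset_rfl, hBconn⟩
    · exact ⟨h • K ^ n, hℬ.smul_mem h (hℬ.pow_mem hK n), hBn,
        (IsKConnected.pow hKsymm hK1 n).smul h⟩
  obtain ⟨g, hg⟩ := exists_compl_subset_smul hℬ hKsymm hLR hdisj hsep
    (isKConnected_of_kConn_compl hKsymm hLR hsep hRconn) hLunb hmeet
    (by rw [insert_eq]; exact hunion _ (hsingle a) _ hS) (hBS.trans (subset_insert a S))
    (hSconn.insert hKsymm (hBS hakB) (by rwa [inv_mul_cancel_left])) (mem_insert a S) haR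
  exact ⟨g, (g • R \ R)⁻¹, hinv _ (hsubset _ _ subset_union_right (htrivR g)),
    inv_sdiff_mul_zpowers_eq_univ_of_compl_subset hKsymm hLR hdisj hsep hgen hx₀ hy₀ hg⟩

theorem two_components_cyclic_bounded_index {G : Type*} [Group G] (ℬ : Set (Set G))
    (hsingle : ∀ g : G, {g} ∈ ℬ)
    (hsubset : ∀ S T : Set G, S ⊆ T → T ∈ ℬ → S ∈ ℬ)
    (hunion : ∀ S ∈ ℬ, ∀ T ∈ ℬ, S ∪ T ∈ ℬ)
    (hmul : ∀ S ∈ ℬ, ∀ T ∈ ℬ, S * T ∈ ℬ)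
    (hinv : ∀ S ∈ ℬ, S⁻¹ ∈ ℬ)
    (K : Set G) (hK : K ∈ ℬ) (hKsymm : K⁻¹ = K) (hK1 : (1 : G) ∈ K)
    (B : Set G) (hB : B ∈ ℬ)
    (L R : Set G)
    (hLR : L ∪ R = Bᶜ) (hdisj : Disjoint L R)
    (hLconn : ∀ x ∈ L, ∀ y ∈ L, KConn K Bᶜ x y)
    (hRconn : ∀ x ∈ R, ∀ y ∈ R, KConn K Bᶜ x y)
    (hsep : ∀ x ∈ L, ∀ y ∈ R, ¬ KConn K Bᶜ x y)
    (hLunb : L ∉ ℬ) (hRunb : R ∉ ℬ)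
    (htrivL : ∀ g : G, (L \ (g • L)) ∪ ((g • L) \ L) ∈ ℬ)
    (htrivR : ∀ g : G, (R \ (g • R)) ∪ ((g • R) \ R) ∈ ℬ)
    (hcond : (∀ x ∈ B, ∀ y ∈ B, KConn K B x y) ∨
      ∃ h : G, ∃ n : ℕ, 1 ≤ n ∧ B ⊆ h • (K ^ n)) :
    ∃ g : G, ∃ C ∈ ℬ, C * ((Subgroup.zpowers g : Subgroup G) : Set G) = Set.univ :=
  two_components_cyclic_bounded_index_general ℬ hsingle hsubset hunion hmul hinv K hK hKsymm hK1 B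
    hB L R hLR hdisj hRconn hsep hLunb hRunb htrivR hcond
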